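/- arXiv:1410.0939 — 2 statements merged into one kernel-verified Lean document; each statement's English description precedes it below -/
import Mathlib

section
/- (Heine–Szegő identity.) Let n ≥ 1 and let f : [0,2π) → ℂ be integrable. Then E_n[∏_{p=1}^n f(θ_p)] = D_{n−1}(f), where D_{n−1}(f) is the determinant of the n×n Toeplitz matrix whose (j,k) entry (0 ≤ j,k ≤ n−1) is the Fourier coefficient f_{j−k}. -/
open MeasureTheory Filter Finset

noncomputable section

/-- `ee x = exp(i x)`. -/
def ee (x : ℝ) : ℂ := Complex.exp (Complex.I * x)

/-- Squared Vandermonde weight `∏_{k<j} |e^{iθ_k} - e^{iθ_j}|²`. -/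
def weyl (n : ℕ) (θ : Fin n → ℝ) : ℝ :=
  ∏ p ∈ Finset.univ.filter (fun p : Fin n × Fin n => p.1 < p.2),
    ‖ee (θ p.1) - ee (θ p.2)‖ ^ 2

/-- CUE eigenvalue expectation `E_n[F]` for complex-valued `F`. -/
def cueEC (n : ℕ) (F : (Fin n → ℝ) → ℂ) : ℂ :=
  ((n.factorial : ℂ) * (2 * Real.pi : ℂ) ^ n)⁻¹ *
    ∫ θ in Set.univ.pi (fun _ : Fin n => Set.Ico (0:ℝ) (2 * Real.pi)), F θ * (weyl n θ : ℂ)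

/-- Fourier coefficient `f_m = (1/2π) ∫_0^{2π} f(φ) e^{-imφ} dφ`. -/
def fCoeff (f : ℝ → ℂ) (m : ℤ) : ℂ :=
  ((2 * Real.pi : ℝ) : ℂ)⁻¹ *
    ∫ φ in Set.Ico (0:ℝ) (2 * Real.pi), f φ * Complex.exp (-Complex.I * m * φ)

/-- The Toeplitz determinant `D_{n-1}(f)`: determinant of the `n × n` matrix with
`(j,k)` entry `f_{j-k}`. -/
def toeplitzDet (n : ℕ) (f : ℝ → ℂ) : ℂ :=
  Matrix.det (Matrix.of fun j k : Fin n => fCoeff f ((j : ℤ) - (k : ℤ)))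

/-! The Weyl weight is `|det V|²` for the Vandermonde matrix `V_{jk} = e^{ijθ_k}`, so the
integrand is a product of two determinants `det[f(θ_k) e^{ijθ_k}] · det[e^{-ijθ_k}]`.
Andréief's identity (expand both determinants over permutations, integrate each product
coordinatewise by Fubini, and recombine the double sum) turns its integral into `n!` times the
determinant of the one-variable integrals `∫ f(θ) e^{i(j-k)θ} dθ = 2π f_{k-j}`. -/

open Equiv

theorem Matrix.sum_sign_mul_sign_mul_prod_eq_factorial_mul_det {ι R : Type*} [Fintype ι]
    [DecidableEq ι] [CommRing R] (G : Matrix ι ι R) :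
    ∑ σ : Perm ι, ∑ τ : Perm ι,
        ((Perm.sign σ : ℤ) : R) * ((Perm.sign τ : ℤ) : R) * ∏ k, G (σ k) (τ k)
      = (Fintype.card ι).factorial * G.det := by
  have inner (σ : Perm ι) : ∑ τ : Perm ι,
      ((Perm.sign σ : ℤ) : R) * ((Perm.sign τ : ℤ) : R) * ∏ k, G (σ k) (τ k) = G.det := by
    rw [← Matrix.det_transpose, Matrix.det_apply, ← Equiv.sum_comp (Equiv.mulRight σ)]
    refine Finset.sum_congr rfl fun π _ => ?_
    have hsign : ((Perm.sign σ : ℤ) : R) * ((Perm.sign (π * σ) : ℤ) : R)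
        = ((Perm.sign π : ℤ) : R) := by
      rw [Perm.sign_mul, Units.val_mul, Int.cast_mul, mul_left_comm, ← Int.cast_mul,
        ← Units.val_mul, Int.units_mul_self, Units.val_one, Int.cast_one, mul_one]
    rw [Equiv.coe_mulRight, hsign, Units.smul_def, zsmul_eq_mul,
      ← Equiv.prod_comp σ (fun k => G.transpose (π k) k)]
    rfl
  rw [Finset.sum_congr rfl fun σ _ => inner σ, Finset.sum_const, Finset.card_univ,
    Fintype.card_perm, nsmul_eq_mul]

theorem integral_det_mul_det_eq_factorial_mul_det {ι α 𝕜 : Type*} [Fintype ι] [DecidableEq ι]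
    [MeasurableSpace α] [RCLike 𝕜] (μ : Measure α) [SigmaFinite μ] (φ ψ : ι → α → 𝕜)
    (hφψ : ∀ i j, Integrable (fun x => φ i x * ψ j x) μ) :
    ∫ x : ι → α, (Matrix.of fun i k => φ i (x k)).det * (Matrix.of fun j k => ψ j (x k)).det
        ∂Measure.pi (fun _ => μ)
      = (Fintype.card ι).factorial * (Matrix.of fun i j => ∫ x, φ i x * ψ j x ∂μ).det := by
  have hdet (χ : ι → α → 𝕜) (x : ι → α) : (Matrix.of fun i k => χ i (x k)).det
      = ∑ σ : Perm ι, ((Perm.sign σ : ℤ) : 𝕜) * ∏ k, χ (σ k) (x k) := by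
    simp only [Matrix.det_apply, Matrix.of_apply, Units.smul_def, zsmul_eq_mul]
  have hexpand (x : ι → α) :
      (Matrix.of fun i k => φ i (x k)).det * (Matrix.of fun j k => ψ j (x k)).det
        = ∑ σ : Perm ι, ∑ τ : Perm ι, ((Perm.sign σ : ℤ) : 𝕜) * ((Perm.sign τ : ℤ) : 𝕜)
            * ∏ k, (φ (σ k) (x k) * ψ (τ k) (x k)) := by
    simp only [hdet, Finset.sum_mul_sum, Finset.prod_mul_distrib]
    exact Finset.sum_congr rfl fun σ _ => Finset.sum_congr rfl fun τ _ => by ring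
  simp_rw [hexpand]
  rw [← Matrix.sum_sign_mul_sign_mul_prod_eq_factorial_mul_det,
    integral_finsetSum _ fun σ _ => integrable_finsetSum _ fun τ _ =>
      (Integrable.fintype_prod fun k => hφψ (σ k) (τ k)).const_mul _]
  refine Finset.sum_congr rfl fun σ _ => ?_
  rw [integral_finsetSum _ fun τ _ =>
    (Integrable.fintype_prod fun k => hφψ (σ k) (τ k)).const_mul _]
  refine Finset.sum_congr rfl fun τ _ => ?_
  rw [integral_const_mul, integral_fintype_prod_eq_prod (fun k x => φ (σ k) x * ψ (τ k) x)]
  rfl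

lemma ee_pow_mul_conj_ee_pow (x : ℝ) (j k : ℕ) :
    ee x ^ j * starRingEnd ℂ (ee x) ^ k
      = Complex.exp (-Complex.I * ((k : ℤ) - (j : ℤ) : ℤ) * x) := by
  rw [ee, ← Complex.exp_conj, ← Complex.exp_nat_mul, ← Complex.exp_nat_mul, ← Complex.exp_add]
  congr 1
  simp only [map_mul, Complex.conj_I, Complex.conj_ofReal]
  push_cast
  ring

lemma integrableOn_mul_exp_neg_I_mul {f : ℝ → ℂ} {s : Set ℝ} (hf : IntegrableOn f s) (m : ℤ) :
    IntegrableOn (fun x => f x * Complex.exp (-Complex.I * m * x)) s := by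
  refine hf.mul_bdd (c := 1) (Continuous.aestronglyMeasurable (by fun_prop))
    (ae_of_all _ fun x => ?_)
  rw [show -Complex.I * m * x = ((-(m * x) : ℝ) : ℂ) * Complex.I by push_cast; ring]
  exact (Complex.norm_exp_ofReal_mul_I _).le

lemma Finset.prod_filter_fst_lt_snd {ι M : Type*} [Fintype ι] [LinearOrder ι]
    [LocallyFiniteOrderTop ι] [CommMonoid M] (F : ι → ι → M) :
    ∏ p ∈ univ.filter (fun p : ι × ι => p.1 < p.2), F p.1 p.2 = ∏ i, ∏ j ∈ Ioi i, F i j := by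
  rw [prod_filter, Fintype.prod_prod_type]
  refine prod_congr rfl fun i _ => ?_
  rw [← prod_filter]
  congr 1
  ext j
  simp

lemma weyl_eq_det_mul_det (n : ℕ) (θ : Fin n → ℝ) :
    (weyl n θ : ℂ) = (Matrix.of fun j k : Fin n => ee (θ k) ^ (j : ℕ)).det
      * (Matrix.of fun j k : Fin n => starRingEnd ℂ (ee (θ k)) ^ (j : ℕ)).det := by
  have hV : (Matrix.of fun j k : Fin n => ee (θ k) ^ (j : ℕ)).det
      = ∏ p ∈ univ.filter (fun p : Fin n × Fin n => p.1 < p.2), (ee (θ p.2) - ee (θ p.1)) := by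
    rw [Finset.prod_filter_fst_lt_snd (fun i j => ee (θ j) - ee (θ i)),
      ← Matrix.det_vandermonde, ← Matrix.det_transpose]
    rfl
  have hconj : (Matrix.of fun j k : Fin n => starRingEnd ℂ (ee (θ k)) ^ (j : ℕ)).det
      = starRingEnd ℂ (Matrix.of fun j k : Fin n => ee (θ k) ^ (j : ℕ)).det := by
    rw [RingHom.map_det]
    congr 1
    ext j k
    simp
  rw [hconj, Complex.mul_conj, ← Complex.sq_norm, hV, norm_prod, ← prod_pow, weyl]
  push_cast
  simp_rw [norm_sub_rev]

lemma setIntegral_mul_exp_neg_I_mul_eq_fCoeff (f : ℝ → ℂ) (m : ℤ) :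
    ∫ x in Set.Ico 0 (2 * Real.pi), f x * Complex.exp (-Complex.I * m * x)
      = ((2 * Real.pi : ℝ) : ℂ) * fCoeff f m := by
  rw [fCoeff, mul_inv_cancel_left₀ (by exact_mod_cast Real.two_pi_pos.ne')]

lemma setIntegral_prod_mul_weyl (n : ℕ) {f : ℝ → ℂ}
    (hf : IntegrableOn f (Set.Ico 0 (2 * Real.pi))) :
    ∫ θ in Set.univ.pi (fun _ : Fin n => Set.Ico 0 (2 * Real.pi)), (∏ p, f (θ p)) * (weyl n θ : ℂ)
      = n.factorial * ((2 * Real.pi : ℝ) : ℂ) ^ n * toeplitzDet n f := by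
  have hprod (θ : Fin n → ℝ) : (∏ p, f (θ p)) * (weyl n θ : ℂ)
      = (Matrix.of fun j k : Fin n => f (θ k) * ee (θ k) ^ (j : ℕ)).det
        * (Matrix.of fun j k : Fin n => starRingEnd ℂ (ee (θ k)) ^ (j : ℕ)).det := by
    rw [weyl_eq_det_mul_det, ← mul_assoc, ← Matrix.det_mul_row]
    rfl
  have hφψ (j k : Fin n) (x : ℝ) : f x * ee x ^ (j : ℕ) * starRingEnd ℂ (ee x) ^ (k : ℕ)
      = f x * Complex.exp (-Complex.I * ((k : ℤ) - (j : ℤ) : ℤ) * x) := by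
    rw [mul_assoc, ee_pow_mul_conj_ee_pow]
  have hG : (Matrix.of fun j k : Fin n => ∫ x in Set.Ico 0 (2 * Real.pi),
        f x * ee x ^ (j : ℕ) * starRingEnd ℂ (ee x) ^ (k : ℕ))
      = ((2 * Real.pi : ℝ) : ℂ) •
          (Matrix.of fun j k : Fin n => fCoeff f ((j : ℤ) - (k : ℤ))).transpose := by
    ext j k
    simp only [hφψ, setIntegral_mul_exp_neg_I_mul_eq_fCoeff]
    rfl
  simp_rw [volume_pi, Measure.restrict_pi_pi, hprod]
  rw [integral_det_mul_det_eq_factorial_mul_det _ (fun (j : Fin n) x => f x * ee x ^ (j : ℕ))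
      (fun (j : Fin n) x => starRingEnd ℂ (ee x) ^ (j : ℕ)) fun j k => by
        simpa only [hφψ, IntegrableOn] using integrableOn_mul_exp_neg_I_mul hf _,
    hG, Matrix.det_smul, Matrix.det_transpose, Fintype.card_fin, ← mul_assoc,
    toeplitzDet]

theorem heine_szego_general (n : ℕ) (f : ℝ → ℂ)
    (hf : IntegrableOn f (Set.Ico (0:ℝ) (2 * Real.pi))) :
    cueEC n (fun θs => ∏ p : Fin n, f (θs p)) = toeplitzDet n f := by
  have h2π : (2 * Real.pi : ℂ) = ((2 * Real.pi : ℝ) : ℂ) := by push_cast; rfl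
  have h2π_ne : (2 * Real.pi : ℂ) ≠ 0 := by rw [h2π]; exact_mod_cast Real.two_pi_pos.ne'
  rw [cueEC, setIntegral_prod_mul_weyl n hf, ← h2π, inv_mul_cancel_left₀]
  exact mul_ne_zero (by exact_mod_cast n.factorial_ne_zero) (pow_ne_zero n h2π_ne)

/-- Heine–Szegő identity. -/
theorem heine_szego (n : ℕ) (hn : 1 ≤ n) (f : ℝ → ℂ)
    (hf : IntegrableOn f (Set.Ico (0:ℝ) (2 * Real.pi))) :
    cueEC n (fun θs => ∏ p : Fin n, f (θs p)) = toeplitzDet n f :=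
  heine_szego_general n f hf

end
end

section
/- For every x ∈ ℝ with x/(2π) ∉ ℤ, the series Σ_{j=1}^∞ cos(jx)/j converges and Σ_{j=1}^∞ cos(jx)/j = −log|1 − e^{ix}|. Equivalently, for θ, θ' ∈ ℝ with (θ−θ')/(2π) ∉ ℤ, (1/2) Σ_{j=1}^∞ cos(j(θ−θ'))/j = −(1/2) log|e^{iθ} − e^{iθ'}|. -/
/-!
For `‖z‖ ≤ 1`, `z ≠ 1`, the partial sums of `∑ zⁿ` are bounded by `2 / ‖z - 1‖`, so Dirichlet's
test makes `∑ zⁿ / n` converge. By Abel's limit theorem its sum is the radial limit of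
`∑ (t z)ⁿ / n = -log (1 - t z)` as `t → 1⁻`, which is `-log (1 - z)` because `1 - z` lies in the
slit plane where `log` is continuous. For `z = e^{ix}` the real part of `zⁿ / n` is `cos (n x) / n`
and the real part of `-log (1 - z)` is `-log ‖1 - z‖`.
-/

open Filter Finset Topology

noncomputable section

lemma norm_geom_sum_le {𝕜 : Type*} [NormedDivisionRing 𝕜] {z : 𝕜} (hz : ‖z‖ ≤ 1) (hz1 : z ≠ 1)
    (n : ℕ) : ‖∑ i ∈ range n, z ^ i‖ ≤ 2 / ‖z - 1‖ := by
  rw [geom_sum_eq hz1, norm_div]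
  gcongr
  calc ‖z ^ n - 1‖ ≤ ‖z ^ n‖ + ‖(1 : 𝕜)‖ := norm_sub_le _ _
    _ ≤ 1 + 1 := by
      rw [norm_pow, norm_one]
      gcongr
      exact pow_le_one₀ (norm_nonneg z) hz
    _ = 2 := one_add_one_eq_two

namespace Complex

lemma cauchySeq_sum_pow_div {z : ℂ} (hz : ‖z‖ ≤ 1) (hz1 : z ≠ 1) :
    CauchySeq fun N : ℕ ↦ ∑ n ∈ range N, z ^ n / n := by
  have hanti : Antitone fun n : ℕ ↦ 1 / ((n : ℝ) + 1) := fun a b h ↦ by dsimp only; gcongr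
  have hbound (n : ℕ) : ‖∑ i ∈ range n, z ^ (i + 1)‖ ≤ 2 / ‖z - 1‖ := by
    simp_rw [pow_succ', ← mul_sum, norm_mul]
    exact (mul_le_of_le_one_left (norm_nonneg _) hz).trans (norm_geom_sum_le hz hz1 n)
  rw [← cauchySeq_shift 1]
  convert hanti.cauchySeq_series_mul_of_tendsto_zero_of_bounded
    tendsto_one_div_add_atTop_nhds_zero_nat hbound using 2 with N
  rw [sum_range_succ']
  simp [div_eq_inv_mul]

lemma one_sub_mem_slitPlane {z : ℂ} (hz : ‖z‖ ≤ 1) (hz1 : z ≠ 1) : 1 - z ∈ slitPlane := by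
  rw [mem_slitPlane_iff]
  by_contra! h
  obtain ⟨hre, him⟩ := h
  simp only [sub_re, one_re, sub_im, one_im] at hre him
  have hre_le : z.re ≤ 1 := (le_abs_self _).trans ((abs_re_le_norm z).trans hz)
  exact hz1 (Complex.ext (by rw [one_re]; linarith) (by rw [one_im]; linarith))

theorem tendsto_sum_pow_div_neg_log {z : ℂ} (hz : ‖z‖ ≤ 1) (hz1 : z ≠ 1) :
    Tendsto (fun N : ℕ ↦ ∑ n ∈ range N, z ^ n / n) atTop (𝓝 (-log (1 - z))) := by
  obtain ⟨L, hL⟩ := cauchySeq_tendsto_of_complete (cauchySeq_sum_pow_div hz hz1)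
  have habel := tendsto_map'_iff.mp (tendsto_tsum_powerSeries_nhdsWithin_lt hL)
  have hradial : (fun t : ℝ ↦ ∑' n : ℕ, z ^ n / n * (t : ℂ) ^ n) =ᶠ[𝓝[<] 1]
      fun t ↦ -log (1 - t * z) := by
    filter_upwards [Ioo_mem_nhdsLT zero_lt_one] with t ht
    have htz : ‖(t : ℂ) * z‖ < 1 := by
      rw [norm_mul, norm_real, Real.norm_of_nonneg ht.1.le]
      nlinarith [ht.1, ht.2, norm_nonneg z]
    rw [← (hasSum_taylorSeries_neg_log htz).tsum_eq]
    exact tsum_congr fun n ↦ by ring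
  have hcont : ContinuousAt (fun t : ℝ ↦ -log (1 - t * z)) 1 :=
    ((continuousAt_clog (by simpa using one_sub_mem_slitPlane hz hz1)).comp
      (by fun_prop)).neg
  have hlim : Tendsto (fun t : ℝ ↦ -log (1 - t * z)) (𝓝[<] 1) (𝓝 (-log (1 - z))) := by
    simpa using hcont.tendsto.mono_left nhdsWithin_le_nhds
  rwa [tendsto_nhds_unique (habel.congr' hradial) hlim] at hL

end Complex

lemma norm_ee (x : ℝ) : ‖ee x‖ = 1 := Complex.norm_exp_I_mul_ofReal x

lemma ee_ne_one {x : ℝ} (hx : ∀ m : ℤ, x ≠ 2 * Real.pi * m) : ee x ≠ 1 := by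
  intro h
  obtain ⟨m, hm⟩ := Complex.exp_eq_one_iff.mp h
  refine hx m (Complex.ofReal_injective ?_)
  apply mul_left_cancel₀ Complex.I_ne_zero
  push_cast
  linear_combination hm

lemma ee_pow (x : ℝ) (n : ℕ) : ee x ^ n = ee (n * x) := by
  rw [ee, ee, ← Complex.exp_nat_mul]
  push_cast
  ring_nf

lemma ee_re (x : ℝ) : (ee x).re = Real.cos x := by
  rw [ee, mul_comm, Complex.exp_ofReal_mul_I_re]

lemma norm_ee_sub_ee (θ θ' : ℝ) : ‖ee θ - ee θ'‖ = ‖1 - ee (θ - θ')‖ := by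
  have h : ee θ - ee θ' = -(ee θ' * (1 - ee (θ - θ'))) := by
    simp only [ee, mul_sub, mul_one, ← Complex.exp_add]
    push_cast
    ring_nf
  rw [h, norm_neg, norm_mul, norm_ee, one_mul]

lemma sum_range_succ_eq_sum_Icc {M : Type*} [AddCommMonoid M] {g : ℕ → M} (hg : g 0 = 0)
    (N : ℕ) : ∑ n ∈ range (N + 1), g n = ∑ n ∈ Icc 1 N, g n := by
  rw [range_eq_Ico, sum_eq_sum_Ico_succ_bot N.succ_pos, hg, zero_add, Nat.succ_eq_add_one,
    Ico_add_one_right_eq_Icc]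

theorem tendsto_sum_Icc_cos_div {x : ℝ} (hx : ∀ m : ℤ, x ≠ 2 * Real.pi * m) :
    Tendsto (fun N : ℕ ↦ ∑ j ∈ Icc 1 N, Real.cos (j * x) / j) atTop
      (𝓝 (-Real.log ‖1 - ee x‖)) := by
  have h := (Complex.continuous_re.tendsto _).comp
    (Complex.tendsto_sum_pow_div_neg_log (norm_ee x).le (ee_ne_one hx))
  rw [Complex.neg_re, Complex.log_re] at h
  refine ((tendsto_add_atTop_iff_nat 1).mpr h).congr fun N ↦ ?_
  simp only [Function.comp_apply, Complex.re_sum, Complex.div_natCast_re, ee_pow, ee_re]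
  exact sum_range_succ_eq_sum_Icc (by simp) N

theorem cos_series_eq_neg_log :
    (∀ x : ℝ, (∀ m : ℤ, x ≠ 2 * Real.pi * m) →
      Tendsto (fun N : ℕ => ∑ j ∈ Finset.Icc 1 N, Real.cos (j * x) / j)
        atTop (nhds (-Real.log (‖1 - ee x‖)))) ∧
    (∀ θ θ' : ℝ, (∀ m : ℤ, θ - θ' ≠ 2 * Real.pi * m) →
      Tendsto (fun N : ℕ => (1/2) * ∑ j ∈ Finset.Icc 1 N, Real.cos (j * (θ - θ')) / j)
        atTop (nhds (-(1/2) * Real.log (‖ee θ - ee θ'‖)))) := by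
  refine ⟨fun x hx ↦ tendsto_sum_Icc_cos_div hx, fun θ θ' hθ ↦ ?_⟩
  rw [norm_ee_sub_ee, neg_mul, ← mul_neg]
  exact (tendsto_sum_Icc_cos_div hθ).const_mul _

end
end
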